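/- Let p ≥ q ≥ 1, let n ≥ 1, and let B be a real p×q matrix with nonnegative entries such that every row of B and every column of B contains a positive entry. For any two positive divisors k and l of n, the (np+q)-square matrices L(F_k) ⊕ I_{(n − n/k)p + (1−k)q} and L(F_l) ⊕ I_{(n − n/l)p + (1−l)q} are cospectral, i.e., they have the same characteristic polynomial (after transporting along a bijection of their index types). -/

import Mathlib

open Matrix

/-- The matrix `F_k` of the generalization of Construction I: indexed by
`(Fin (n/k) × Fin p) ⊕ (Fin k × Fin q)`, with a copy of `B` between every `p`-block and every
`q`-block, and zero blocks otherwise. -/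
def matF (p q n k : ℕ) (B : Matrix (Fin p) (Fin q) ℝ) :
    Matrix ((Fin (n / k) × Fin p) ⊕ Fin k × Fin q) ((Fin (n / k) × Fin p) ⊕ Fin k × Fin q) ℝ :=
  Matrix.of fun a b =>
    match a, b with
    | Sum.inl (_, i), Sum.inr (_, j) => B i j
    | Sum.inr (_, j), Sum.inl (_, i) => B i j
    | _, _ => 0

/-- The normalized Laplacian `L(M) = I − Δ^{-1/2} M Δ^{-1/2}` of a matrix `M`, where
`Δ^{-1/2}` is the diagonal matrix of reciprocal square roots of the row sums of `M`. -/
noncomputable def normLap {ι : Type} [Fintype ι] [DecidableEq ι] (M : Matrix ι ι ℝ) :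
    Matrix ι ι ℝ :=
  1 - Matrix.diagonal (fun i => (Real.sqrt (∑ j, M i j))⁻¹) * M *
      Matrix.diagonal (fun i => (Real.sqrt (∑ j, M i j))⁻¹)

/-! Let `π : (Fin (n/k) × Fin p) ⊕ (Fin k × Fin q) → Fin p ⊕ Fin q` forget the block index,
and let `P` be the incidence matrix of its fibers with columns scaled to unit length, so
`Pᵀ P = 1`. The fibers have sizes `n/k` and `k`, which is exactly what makes the normalized
adjacency matrix of `F_k` equal to `P S Pᵀ`, where `S` is the normalized adjacency matrix of
`[0 B; Bᵀ 0]` and does not depend on `k`. Padding `P` with zero rows gives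
`L(F_k) ⊕ I = 1 - P S Pᵀ` on `np + q` indices. Now `X^(p+q) χ(P S Pᵀ) = X^(np+q) χ(S)` and
`χ(1 - M)` is determined by `χ(M)`, so both characteristic polynomials are determined by `S`
and `np + q`. -/

open Polynomial Finset

namespace Matrix
variable {R : Type*} [CommRing R] {ι ι' κ m : Type*}

section charpoly
variable [Fintype ι] [DecidableEq ι] [Fintype ι'] [DecidableEq ι'] [Fintype m] [DecidableEq m]

theorem charpoly_one_sub (M : Matrix ι ι R) :
    (1 - M).charpoly = (-1) ^ Fintype.card ι * M.charpoly.comp (1 - X) := by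
  have h : (charmatrix M).map (compRingHom (1 - X)) = -charmatrix (1 - M) := by
    ext i j
    by_cases hij : i = j
    · subst hij; simp; ring
    · simp [hij]
  have hcomp : M.charpoly.comp (1 - X) = (-1) ^ Fintype.card ι * (1 - M).charpoly := by
    rw [← coe_compRingHom_apply, charpoly, RingHom.map_det, RingHom.mapMatrix_apply, h, det_neg,
      charpoly]
  rw [hcomp, ← mul_assoc, ← mul_pow, neg_one_mul, neg_neg, one_pow, one_mul]

theorem charpoly_mul_mul_transpose {P : Matrix ι m R} (hP : Pᵀ * P = 1) (S : Matrix m m R) :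
    X ^ Fintype.card m * (P * S * Pᵀ).charpoly = X ^ Fintype.card ι * S.charpoly := by
  rw [charpoly_mul_comm', ← Matrix.mul_assoc, hP, Matrix.one_mul]

theorem charpoly_one_sub_mul_mul_transpose_eq {P : Matrix ι m R} {P' : Matrix ι' m R}
    (hP : Pᵀ * P = 1) (hP' : P'ᵀ * P' = 1) (hcard : Fintype.card ι = Fintype.card ι')
    (S : Matrix m m R) :
    (1 - P * S * Pᵀ).charpoly = (1 - P' * S * P'ᵀ).charpoly := by
  have h : (P * S * Pᵀ).charpoly = (P' * S * P'ᵀ).charpoly := by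
    rw [← (isRegular_X_pow (R := R) (Fintype.card m)).left.eq_iff,
      charpoly_mul_mul_transpose hP, charpoly_mul_mul_transpose hP', hcard]
  rw [charpoly_one_sub, charpoly_one_sub, h, hcard]

theorem charpoly_submatrix_equiv (M : Matrix ι ι R) (e : ι' ≃ ι) :
    (M.submatrix e e).charpoly = M.charpoly := by
  simpa using charpoly_reindex e.symm M

end charpoly

theorem fromBlocks_one_sub_zero_zero_one [DecidableEq ι] [DecidableEq κ] (A : Matrix ι ι R) :
    fromBlocks (1 - A) 0 0 (1 : Matrix κ κ R) = 1 - fromBlocks A 0 0 0 := by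
  rw [eq_sub_iff_add_eq, fromBlocks_add, ← fromBlocks_one]
  simp

theorem transpose_fromRows_zero_mul_self [Fintype ι] [Fintype κ] (P : Matrix ι m R) :
    (fromRows P (0 : Matrix κ m R))ᵀ * fromRows P (0 : Matrix κ m R) = Pᵀ * P := by
  rw [transpose_fromRows, Matrix.fromCols_mul_fromRows]
  simp

theorem fromRows_zero_mul_mul_transpose [Fintype m] (P : Matrix ι m R) (S : Matrix m m R) :
    fromRows P (0 : Matrix κ m R) * S * (fromRows P 0)ᵀ =
      fromBlocks (P * S * Pᵀ) (0 : Matrix ι κ R) 0 0 := by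
  rw [fromRows_mul, transpose_fromRows, fromRows_mul_fromCols]
  simp

end Matrix

section Fiber
variable {ι κ : Type*} [Fintype ι] [DecidableEq κ]

noncomputable def fiberIncidence (π : ι → κ) : Matrix ι κ ℝ :=
  of fun x u => if π x = u then (√(#{y | π y = u} : ℝ))⁻¹ else 0

theorem fiberIncidence_transpose_mul_self {π : ι → κ} (hπ : π.Surjective) :
    (fiberIncidence π)ᵀ * fiberIncidence π = 1 := by
  ext u v
  rw [mul_apply, one_apply]
  split_ifs with huv
  · subst huv
    have hpos : (0 : ℝ) < #{y | π y = u} := by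
      obtain ⟨x, hx⟩ := hπ u
      exact_mod_cast Finset.card_pos.mpr ⟨x, by simp [hx]⟩
    simp only [transpose_apply, fiberIncidence, of_apply, mul_ite, ite_mul, zero_mul, mul_zero,
      ← sum_filter, filter_filter, and_self, sum_const, nsmul_eq_mul]
    rw [← mul_inv, Real.mul_self_sqrt hpos.le, mul_inv_cancel₀ hpos.ne']
  · refine sum_eq_zero fun x _ => ?_
    simp only [transpose_apply, fiberIncidence, of_apply]
    split_ifs with hu hv <;> simp_all

theorem fiberIncidence_mul_mul_transpose_apply [Fintype κ] (π : ι → κ) (S : Matrix κ κ ℝ)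
    (x y : ι) :
    (fiberIncidence π * S * (fiberIncidence π)ᵀ) x y =
      (√(#{z | π z = π x} : ℝ))⁻¹ * S (π x) (π y) *
        (√(#{z | π z = π y} : ℝ))⁻¹ := by
  simp [mul_apply, fiberIncidence]

end Fiber

noncomputable def normAdj {ι : Type*} [Fintype ι] [DecidableEq ι] (M : Matrix ι ι ℝ) :
    Matrix ι ι ℝ :=
  diagonal (fun i => (√(∑ j, M i j))⁻¹) * M * diagonal (fun i => (√(∑ j, M i j))⁻¹)

theorem normAdj_apply {ι : Type*} [Fintype ι] [DecidableEq ι] (M : Matrix ι ι ℝ) (x y : ι) :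
    normAdj M x y = (√(∑ j, M x j))⁻¹ * M x y * (√(∑ j, M y j))⁻¹ := by
  rw [normAdj, mul_diagonal, diagonal_mul]

theorem normLap_eq_one_sub_normAdj {ι : Type} [Fintype ι] [DecidableEq ι]
    (M : Matrix ι ι ℝ) :
    normLap M = 1 - normAdj M :=
  rfl

section matF
variable (p q n k : ℕ)

def matFProj : (Fin (n / k) × Fin p) ⊕ Fin k × Fin q → Fin p ⊕ Fin q :=
  Sum.map Prod.snd Prod.snd

theorem matFProj_surjective (hn : 0 < n) (hk : k ∣ n) : (matFProj p q n k).Surjective := by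
  have hk0 : 0 < k := Nat.pos_of_dvd_of_pos hk hn
  have hnk : 0 < n / k := Nat.div_pos (Nat.le_of_dvd hn hk) hk0
  rintro (a | b)
  · exact ⟨.inl (⟨0, hnk⟩, a), rfl⟩
  · exact ⟨.inr (⟨0, hk0⟩, b), rfl⟩

@[simp]
theorem matFProj_inl (i : Fin (n / k)) (a : Fin p) : matFProj p q n k (.inl (i, a)) = .inl a :=
  rfl

@[simp]
theorem matFProj_inr (j : Fin k) (b : Fin q) : matFProj p q n k (.inr (j, b)) = .inr b :=
  rfl

theorem card_matFProj_fiber_inl (i : Fin (n / k)) (a : Fin p) :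
    #{z | matFProj p q n k z = matFProj p q n k (.inl (i, a))} = n / k := by
  rw [card_filter]
  simp only [Fintype.sum_sum_type, Fintype.sum_prod_type, matFProj_inl, matFProj_inr,
    Sum.inl.injEq, reduceCtorEq]
  simp

theorem card_matFProj_fiber_inr (j : Fin k) (b : Fin q) :
    #{z | matFProj p q n k z = matFProj p q n k (.inr (j, b))} = k := by
  rw [card_filter]
  simp only [Fintype.sum_sum_type, Fintype.sum_prod_type, matFProj_inl, matFProj_inr,
    Sum.inr.injEq, reduceCtorEq]
  simp

theorem matF_apply (B : Matrix (Fin p) (Fin q) ℝ) (x y) :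
    matF p q n k B x y = fromBlocks 0 B Bᵀ 0 (matFProj p q n k x) (matFProj p q n k y) := by
  rcases x with ⟨_, _⟩ | ⟨_, _⟩ <;> rcases y with ⟨_, _⟩ | ⟨_, _⟩ <;> rfl

theorem sum_matF_apply_inl (B : Matrix (Fin p) (Fin q) ℝ) (i : Fin (n / k)) (a : Fin p) :
    ∑ y, matF p q n k B (.inl (i, a)) y = k * ∑ b, B a b := by
  simp [matF, Fintype.sum_sum_type, Fintype.sum_prod_type]

theorem sum_matF_apply_inr (B : Matrix (Fin p) (Fin q) ℝ) (j : Fin k) (b : Fin q) :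
    ∑ y, matF p q n k B (.inr (j, b)) y = (n / k : ℕ) * ∑ a, B a b := by
  simp [matF, Fintype.sum_sum_type, Fintype.sum_prod_type]

-- No positivity of `B` is needed: `√(k * r) = √k * √r` for every real `r` once `0 ≤ k`.
theorem normAdj_matF (B : Matrix (Fin p) (Fin q) ℝ) :
    normAdj (matF p q n k B) =
      fiberIncidence (matFProj p q n k) * normAdj (fromBlocks 0 B Bᵀ 0) *
        (fiberIncidence (matFProj p q n k))ᵀ := by
  ext x y
  rw [fiberIncidence_mul_mul_transpose_apply, normAdj_apply, normAdj_apply, matF_apply]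
  rcases x with ⟨i, a⟩ | ⟨j, b⟩ <;> rcases y with ⟨i', a'⟩ | ⟨j', b'⟩
  case inl.inl | inr.inr => simp
  all_goals
    rw [card_matFProj_fiber_inl, card_matFProj_fiber_inr, sum_matF_apply_inl, sum_matF_apply_inr,
      Real.sqrt_mul (Nat.cast_nonneg _), Real.sqrt_mul (Nat.cast_nonneg _), mul_inv, mul_inv]
    simp only [matFProj_inl, matFProj_inr, Fintype.sum_sum_type, fromBlocks_apply₁₁,
      fromBlocks_apply₁₂, fromBlocks_apply₂₁, fromBlocks_apply₂₂, transpose_apply,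
      Matrix.zero_apply, sum_const_zero, zero_add, add_zero]
    ring

theorem card_matF_index_padded (hpq : q ≤ p) (hn : 0 < n) (hk : k ∣ n) :
    Fintype.card (((Fin (n / k) × Fin p) ⊕ Fin k × Fin q) ⊕
      Fin (n * p + q - (k * q + n / k * p))) = n * p + q := by
  obtain ⟨d, rfl⟩ := hk
  obtain ⟨k', rfl⟩ : ∃ k', k = k' + 1 :=
    Nat.exists_eq_add_one.mpr (Nat.pos_of_mul_pos_right hn)
  have hd : 0 < d := Nat.pos_of_mul_pos_left hn
  have hqd : k' * q ≤ k' * (d * p) :=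
    Nat.mul_le_mul_left _ (hpq.trans (Nat.le_mul_of_pos_left p hd))
  simp only [Fintype.card_sum, Fintype.card_prod, Fintype.card_fin,
    Nat.mul_div_cancel_left d k'.succ_pos]
  have : (k' + 1) * q + d * p ≤ (k' + 1) * d * p + q := by nlinarith
  omega

theorem fromBlocks_normLap_matF_one (m : ℕ) (B : Matrix (Fin p) (Fin q) ℝ) :
    fromBlocks (normLap (matF p q n k B)) 0 0 (1 : Matrix (Fin m) (Fin m) ℝ) =
      1 - fromRows (fiberIncidence (matFProj p q n k)) 0 * normAdj (fromBlocks 0 B Bᵀ 0) *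
        (fromRows (fiberIncidence (matFProj p q n k)) 0)ᵀ := by
  rw [normLap_eq_one_sub_normAdj, normAdj_matF, fromBlocks_one_sub_zero_zero_one,
    fromRows_zero_mul_mul_transpose]

theorem fromRows_fiberIncidence_matFProj_transpose_mul_self (m : ℕ) (hn : 0 < n) (hk : k ∣ n) :
    (fromRows (fiberIncidence (matFProj p q n k)) (0 : Matrix (Fin m) _ ℝ))ᵀ *
      fromRows (fiberIncidence (matFProj p q n k)) (0 : Matrix (Fin m) _ ℝ) = 1 := by
  rw [transpose_fromRows_zero_mul_self,
    fiberIncidence_transpose_mul_self (matFProj_surjective p q n k hn hk)]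

end matF

theorem matF_normLap_cospectral_general (p q n k l : ℕ) (hpq : q ≤ p) (hn : 1 ≤ n)
    (hk : k ∣ n) (hl : l ∣ n) (B : Matrix (Fin p) (Fin q) ℝ) :
    ∃ e : (((Fin (n / k) × Fin p) ⊕ Fin k × Fin q) ⊕ Fin (n * p + q - (k * q + n / k * p))) ≃
        (((Fin (n / l) × Fin p) ⊕ Fin l × Fin q) ⊕ Fin (n * p + q - (l * q + n / l * p))),
      (Matrix.fromBlocks (normLap (matF p q n k B)) 0 0
          (1 : Matrix (Fin (n * p + q - (k * q + n / k * p)))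
            (Fin (n * p + q - (k * q + n / k * p))) ℝ)).charpoly =
        ((Matrix.fromBlocks (normLap (matF p q n l B)) 0 0
            (1 : Matrix (Fin (n * p + q - (l * q + n / l * p)))
              (Fin (n * p + q - (l * q + n / l * p))) ℝ)).submatrix e e).charpoly := by
  have hcard := (card_matF_index_padded p q n k hpq hn hk).trans
    (card_matF_index_padded p q n l hpq hn hl).symm
  refine ⟨Fintype.equivOfCardEq hcard, ?_⟩
  rw [charpoly_submatrix_equiv, fromBlocks_normLap_matF_one, fromBlocks_normLap_matF_one]
  exact charpoly_one_sub_mul_mul_transpose_eq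
    (fromRows_fiberIncidence_matFProj_transpose_mul_self p q n k _ hn hk)
    (fromRows_fiberIncidence_matFProj_transpose_mul_self p q n l _ hn hl) hcard _

/-- For any two positive divisors `k` and `l` of `n`, the `(np+q)`-square matrices
`L(F_k) ⊕ I_{(n − n/k)p + (1−k)q}` and `L(F_l) ⊕ I_{(n − n/l)p + (1−l)q}` are cospectral.
(The number of padding ones `(n − n/k)p + (1−k)q = np + q − (kq + (n/k)p)`.) -/
theorem matF_normLap_cospectral (p q n k l : ℕ) (hq : 1 ≤ q) (hpq : q ≤ p) (hn : 1 ≤ n)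
    (hk : k ∣ n) (hk1 : 1 ≤ k) (hl : l ∣ n) (hl1 : 1 ≤ l)
    (B : Matrix (Fin p) (Fin q) ℝ) (hB : ∀ i j, 0 ≤ B i j)
    (hrow : ∀ i, ∃ j, 0 < B i j) (hcol : ∀ j, ∃ i, 0 < B i j) :
    ∃ e : (((Fin (n / k) × Fin p) ⊕ Fin k × Fin q) ⊕ Fin (n * p + q - (k * q + n / k * p))) ≃
        (((Fin (n / l) × Fin p) ⊕ Fin l × Fin q) ⊕ Fin (n * p + q - (l * q + n / l * p))),
      (Matrix.fromBlocks (normLap (matF p q n k B)) 0 0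
          (1 : Matrix (Fin (n * p + q - (k * q + n / k * p)))
            (Fin (n * p + q - (k * q + n / k * p))) ℝ)).charpoly =
        ((Matrix.fromBlocks (normLap (matF p q n l B)) 0 0
            (1 : Matrix (Fin (n * p + q - (l * q + n / l * p)))
              (Fin (n * p + q - (l * q + n / l * p))) ℝ)).submatrix e e).charpoly :=
  matF_normLap_cospectral_general p q n k l hpq hn hk hl B
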